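/- Let G and H be regular graphs with degrees d_G and d_H, x1, x2 ∈ V(G) with N_G[x1] = N_G[x2], and y1y2 ∈ E(H). Then the maximum, over all optimal assignments φ between R_{(x1,y1)}((x1,y1),(x2,y2)) and R_{(x2,y2)}((x1,y1),(x2,y2)) in G ⊠ H, of the maximum displacement sup_z d(z, φ(z)) equals the corresponding quantity for optimal assignments between R_{y1}(y1,y2) and R_{y2}(y1,y2) in H. -/

import Mathlib

open SimpleGraph Filter Set

noncomputable section
attribute [local instance] Classical.propDecidable

variable {V α β : Type*}

/-- The strong product of two simple graphs. -/
def StrongProd (G : SimpleGraph α) (H : SimpleGraph β) : SimpleGraph (α × β) where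
  Adj p q := p ≠ q ∧ (p.1 = q.1 ∨ G.Adj p.1 q.1) ∧ (p.2 = q.2 ∨ H.Adj p.2 q.2)
  symm := by
    refine ⟨?_⟩
    rintro p q ⟨h1, h2, h3⟩
    exact ⟨h1.symm, h2.imp Eq.symm Adj.symm, h3.imp Eq.symm Adj.symm⟩
  loopless := ⟨fun p h => h.1 rfl⟩

/-- Closed neighborhood N[x]. -/
def closedNbr (G : SimpleGraph V) (x : V) : Set V := insert x (G.neighborSet x)

/-- The set R_x(x,y) = N(x) \ ((N(x) ∩ N(y)) ∪ {y}). -/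
def Rside (G : SimpleGraph V) (x y : V) : Set V :=
  G.neighborSet x \ ((G.neighborSet x ∩ G.neighborSet y) ∪ {y})

/-- Total transport cost of an assignment (bijection) between R_x(x,y) and R_y(x,y). -/
def cost (G : SimpleGraph V) (x y : V) (φ : Rside G x y ≃ Rside G y x) : ℝ :=
  ∑' z : Rside G x y, (G.dist z.1 (φ z).1 : ℝ)

/-- The optimal (minimal) total transport cost over all assignments. -/
def OPTc (G : SimpleGraph V) (x y : V) : ℝ :=
  sInf { c | ∃ φ : Rside G x y ≃ Rside G y x, c = cost G x y φ }

/-- An assignment is optimal if it attains the minimal total cost. -/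
def IsOptimal (G : SimpleGraph V) (x y : V) (φ : Rside G x y ≃ Rside G y x) : Prop :=
  cost G x y φ = OPTc G x y

/-- The largest displacement appearing in an optimal assignment, maximized over
optimal assignments. -/
def MAXc (G : SimpleGraph V) (x y : V) : ℝ :=
  sSup { m | ∃ φ : Rside G x y ≃ Rside G y x, IsOptimal G x y φ ∧
    m = ⨆ z : Rside G x y, (G.dist z.1 (φ z).1 : ℝ) }

/-- The measure μ_x^α. -/
def muMeas (G : SimpleGraph V) [G.LocallyFinite] (α : ℝ) (x : V) : V → ℝ :=
  fun z => if z = x then α else if G.Adj x z then (1 - α) / (G.degree x) else 0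

/-- Wasserstein (optimal transport) distance between two measures with respect to
the graph distance. -/
def Wass (G : SimpleGraph V) (μ ν : V → ℝ) : ℝ :=
  sInf { c | ∃ π : V → V → ℝ, (∀ u v, 0 ≤ π u v) ∧
    (∀ u, ∑' v, π u v = μ u) ∧ (∀ v, ∑' u, π u v = ν v) ∧
    c = ∑' u, ∑' v, (G.dist u v : ℝ) * π u v }

/-- The α-Ricci (Ollivier) curvature of an edge xy. -/
def kap (G : SimpleGraph V) [G.LocallyFinite] (α : ℝ) (x y : V) : ℝ :=
  1 - Wass G (muMeas G α x) (muMeas G α y)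

/-- Ollivier Ricci curvature with idleness 0. -/
def kap0 (G : SimpleGraph V) [G.LocallyFinite] (x y : V) : ℝ := kap G 0 x y

/-- `IsLLY G x y k` says that the Lin–Lu–Yau curvature of the edge xy exists and
equals k, i.e. κ_α(x,y)/(1-α) → k as α → 1⁻. -/
def IsLLY (G : SimpleGraph V) [G.LocallyFinite] (x y : V) (k : ℝ) : Prop :=
  Tendsto (fun α => kap G α x y / (1 - α)) (nhdsWithin 1 (Set.Iio 1)) (nhds k)


set_option linter.unusedSectionVars false
set_option maxHeartbeats 1000000

section Abstract
variable {B C : Type*} [Fintype B] [Fintype C]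

def Acost (D : B → C → ℝ) (σ : B ≃ C) : ℝ := ∑' b, D b (σ b)

def AOPT (D : B → C → ℝ) : ℝ := sInf { c | ∃ σ : B ≃ C, c = Acost D σ }

def AMAX (D : B → C → ℝ) : ℝ :=
  sSup { m | ∃ σ : B ≃ C, Acost D σ = AOPT D ∧ m = ⨆ b, D b (σ b) }

lemma Acost_eq_sum (D : B → C → ℝ) (σ : B ≃ C) : Acost D σ = ∑ b, D b (σ b) :=
  tsum_fintype _

lemma costset_finite (D : B → C → ℝ) : { c | ∃ σ : B ≃ C, c = Acost D σ }.Finite := by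
  have : { c | ∃ σ : B ≃ C, c = Acost D σ } = Set.range (fun σ : B ≃ C => Acost D σ) := by
    ext c; simp [eq_comm, Set.mem_range]
  rw [this]; exact Set.finite_range _

lemma Acost_ge_AOPT (D : B → C → ℝ) (σ : B ≃ C) : AOPT D ≤ Acost D σ :=
  csInf_le (costset_finite D).bddBelow ⟨σ, rfl⟩

lemma exists_optimal (D : B → C → ℝ) (h : Nonempty (B ≃ C)) :
    ∃ σ : B ≃ C, Acost D σ = AOPT D := by
  have hne : { c | ∃ σ : B ≃ C, c = Acost D σ }.Nonempty := ⟨Acost D h.some, h.some, rfl⟩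
  obtain ⟨σ, hσ⟩ := hne.csInf_mem (costset_finite D)
  exact ⟨σ, hσ.symm⟩

lemma maxset_finite (D : B → C → ℝ) :
    { m | ∃ σ : B ≃ C, Acost D σ = AOPT D ∧ m = ⨆ b, D b (σ b) }.Finite := by
  apply Set.Finite.subset (Set.finite_range (fun σ : B ≃ C => ⨆ b, D b (σ b)))
  rintro m ⟨σ, -, rfl⟩; exact ⟨σ, rfl⟩

lemma disp_le_AMAX (D : B → C → ℝ) (σ : B ≃ C) (hσ : Acost D σ = AOPT D) (b : B) :
    D b (σ b) ≤ AMAX D := by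
  have h1 : D b (σ b) ≤ ⨆ b, D b (σ b) :=
    le_ciSup (f := fun b => D b (σ b)) (Set.finite_range _).bddAbove b
  have h2 : (⨆ b, D b (σ b)) ≤ AMAX D :=
    le_csSup (maxset_finite D).bddAbove ⟨σ, hσ, rfl⟩
  linarith

/-- Hall-type lemma: a regular nonneg integer matrix has a positive diagonal through a
prescribed positive entry. -/
lemma hall_forced (w : B → C → ℕ) (k : ℕ)
    (hrow : ∀ b, ∑ c, w b c = k) (hcol : ∀ c, ∑ b, w b c = k)
    (b0 : B) (c0 : C) (h0 : 0 < w b0 c0) :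
    ∃ σ : B ≃ C, σ b0 = c0 ∧ ∀ b, 0 < w b (σ b) := by
  have hk : 1 ≤ k := by
    rw [← hrow b0]
    calc 1 ≤ w b0 c0 := h0
    _ ≤ ∑ c, w b0 c := Finset.single_le_sum (fun _ _ => Nat.zero_le _) (Finset.mem_univ _)
  classical
  set t : B → Finset C := fun b =>
    if b = b0 then {c0} else (Finset.univ.filter fun c => 0 < w b c).erase c0 with ht
  have key : ∀ s : Finset B, b0 ∉ s → s.card ≤ (s.biUnion t).card := by
    intro s hb0
    set U := s.biUnion t with hU
    set g : C → ℕ := fun c => ∑ b ∈ s, w b c with hg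
    have hg_le : ∀ c, g c ≤ k := by
      intro c
      rw [← hcol c]
      exact Finset.sum_le_sum_of_subset (Finset.subset_univ s)
    have hgc0 : g c0 ≤ k - 1 := by
      have h2 : g c0 + w b0 c0 ≤ k := by
        rw [← hcol c0]
        have h3 : (insert b0 s).sum (fun b => w b c0) ≤ ∑ b, w b c0 :=
          Finset.sum_le_sum_of_subset (Finset.subset_univ _)
        rwa [Finset.sum_insert hb0, add_comm] at h3
      omega
    have hzero : ∀ c, c ∉ insert c0 U → g c = 0 := by
      intro c hc
      apply Finset.sum_eq_zero
      intro b hb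
      by_contra hw
      have hbne : b ≠ b0 := fun h => hb0 (h ▸ hb)
      have hcU : c ∈ U := by
        apply Finset.mem_biUnion.mpr ⟨b, hb, ?_⟩
        rw [ht]; simp only [if_neg hbne]
        refine Finset.mem_erase.mpr ⟨fun h => hc ?_, ?_⟩
        · subst h; exact Finset.mem_insert_self c U
        · simp only [Finset.mem_filter, Finset.mem_univ, true_and]
          omega
      exact hc (Finset.mem_insert_of_mem hcU)
    have hsum : k * s.card = ∑ c ∈ insert c0 U, g c := by
      have h1 : k * s.card = ∑ b ∈ s, ∑ c, w b c := by
        rw [Finset.sum_congr rfl (fun b _ => hrow b), Finset.sum_const, smul_eq_mul, mul_comm]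
      rw [h1, Finset.sum_comm]
      exact (Finset.sum_subset (Finset.subset_univ _) (fun c _ hc => hzero c hc)).symm
    have hins : insert c0 U = insert c0 (U.erase c0) := by
      ext x; simp only [Finset.mem_insert, Finset.mem_erase]; tauto
    have hbound : ∑ c ∈ insert c0 U, g c ≤ (k - 1) + U.card * k := by
      rw [hins, Finset.sum_insert (Finset.notMem_erase _ _)]
      have h4 : ∑ c ∈ U.erase c0, g c ≤ (U.erase c0).card * k :=
        Finset.sum_le_card_nsmul _ _ k (fun c _ => hg_le c)
      have h5 : (U.erase c0).card ≤ U.card := Finset.card_erase_le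
      have := Nat.mul_le_mul_right k h5
      omega
    -- conclude s.card ≤ U.card
    by_contra hcon
    push_neg at hcon
    have h5 : k * (U.card + 1) ≤ k * s.card := Nat.mul_le_mul_left k hcon
    have h6 : k * (U.card + 1) ≤ k - 1 + U.card * k := le_trans (hsum ▸ h5) hbound
    have h7 : U.card * k + k ≤ U.card * k + (k - 1) := by
      calc U.card * k + k = k * (U.card + 1) := by ring
      _ ≤ k - 1 + U.card * k := h6
      _ = U.card * k + (k - 1) := by ring
    have h8 : k ≤ k - 1 := Nat.add_le_add_iff_left.mp h7
    omega
  have hall : ∀ s : Finset B, s.card ≤ (s.biUnion t).card := by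
    intro s
    by_cases hb : b0 ∈ s
    · have hs : s = insert b0 (s.erase b0) := (Finset.insert_erase hb).symm
      rw [hs, Finset.biUnion_insert]
      have htb0 : t b0 = {c0} := by rw [ht]; simp
      have hdisj : Disjoint (t b0) ((s.erase b0).biUnion t) := by
        rw [htb0, Finset.disjoint_singleton_left]
        intro hc
        obtain ⟨b, hb1, hb2⟩ := Finset.mem_biUnion.mp hc
        have hbne : b ≠ b0 := Finset.ne_of_mem_erase hb1
        rw [ht] at hb2; simp only [if_neg hbne] at hb2
        exact Finset.notMem_erase _ _ hb2
      rw [Finset.card_union_of_disjoint hdisj, htb0, Finset.card_singleton,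
        Finset.card_insert_of_notMem (Finset.notMem_erase _ _)]
      have := key _ (Finset.notMem_erase b0 s)
      omega
    · exact key s hb
  obtain ⟨f, hfinj, hft⟩ := (Finset.all_card_le_biUnion_card_iff_exists_injective t).mp hall
  have hcard : Fintype.card B = Fintype.card C := by
    have h1 : k * Fintype.card B = k * Fintype.card C := by
      have := Finset.sum_comm (s := Finset.univ) (t := Finset.univ) (f := fun b c => w b c)
      calc k * Fintype.card B = ∑ b : B, ∑ c : C, w b c := by
            rw [Finset.sum_congr rfl (fun b _ => hrow b), Finset.sum_const, smul_eq_mul, mul_comm]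
            rfl
      _ = ∑ c : C, ∑ b : B, w b c := this
      _ = k * Fintype.card C := by
            rw [Finset.sum_congr rfl (fun c _ => hcol c), Finset.sum_const, smul_eq_mul, mul_comm]
            rfl
    exact Nat.eq_of_mul_eq_mul_left hk h1
  have hbij : Function.Bijective f := (Fintype.bijective_iff_injective_and_card f).mpr ⟨hfinj, hcard⟩
  refine ⟨Equiv.ofBijective f hbij, ?_, ?_⟩
  · have := hft b0
    rw [ht] at this; simp only [if_pos rfl, if_true, Finset.mem_singleton] at this
    exact this
  · intro b
    by_cases hb : b = b0
    · subst hb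
      have : Equiv.ofBijective f hbij b = c0 := by
        have := hft b; rw [ht] at this; simp only [if_pos rfl, if_true, Finset.mem_singleton] at this
        exact this
      rw [this]; exact h0
    · have := hft b
      rw [ht] at this; simp only [if_neg hb] at this
      have := Finset.mem_of_mem_erase this
      simp only [Finset.mem_filter, Finset.mem_univ, true_and] at this
      exact this


lemma Acost_empty [IsEmpty B] (D : B → C → ℝ) (σ : B ≃ C) : Acost D σ = 0 := by
  rw [Acost_eq_sum]; simp

lemma AOPT_empty [IsEmpty B] [IsEmpty C] (D : B → C → ℝ) : AOPT D = 0 := by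
  have h : { c | ∃ σ : B ≃ C, c = Acost D σ } = {0} := by
    ext x
    simp only [Set.mem_setOf_eq, Set.mem_singleton_iff]
    constructor
    · rintro ⟨σ, rfl⟩; exact Acost_empty D σ
    · rintro rfl; exact ⟨Equiv.equivOfIsEmpty B C, (Acost_empty D _).symm⟩
  rw [AOPT, h, csInf_singleton]

lemma AMAX_empty [IsEmpty B] [IsEmpty C] (D : B → C → ℝ) : AMAX D = 0 := by
  have h : { m | ∃ σ : B ≃ C, Acost D σ = AOPT D ∧ m = ⨆ b, D b (σ b) } = {0} := by
    ext x
    simp only [Set.mem_setOf_eq, Set.mem_singleton_iff]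
    constructor
    · rintro ⟨σ, -, rfl⟩; exact Real.iSup_of_isEmpty _
    · rintro rfl
      exact ⟨Equiv.equivOfIsEmpty B C, by rw [Acost_empty, AOPT_empty],
        (Real.iSup_of_isEmpty _).symm⟩
  rw [AMAX, h, csSup_singleton]

/-- Subtracting a positive permutation from a regular matrix. -/
lemma sub_perm (w : B → C → ℕ) (k : ℕ)
    (hrow : ∀ b, ∑ c, w b c = k) (hcol : ∀ c, ∑ b, w b c = k)
    (σ : B ≃ C) (hpos : ∀ b, 0 < w b (σ b)) (D : B → C → ℝ) :
    (∀ b, ∑ c, (w b c - if σ b = c then 1 else 0) = k - 1) ∧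
    (∀ c, ∑ b, (w b c - if σ b = c then 1 else 0) = k - 1) ∧
    ∑ b, ∑ c, (w b c : ℝ) * D b c =
      (∑ b, D b (σ b)) + ∑ b, ∑ c, ((w b c - if σ b = c then 1 else 0 : ℕ) : ℝ) * D b c := by
  classical
  have hsplit : ∀ b c, w b c = (w b c - if σ b = c then 1 else 0) + (if σ b = c then 1 else 0) := by
    intro b c
    by_cases h : σ b = c
    · have := hpos b
      rw [h] at this
      simp only [if_pos h]
      omega
    · simp only [if_neg h]
      omega
  have hite_row : ∀ b, ∑ c, (if σ b = c then 1 else 0) = 1 := by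
    intro b; rw [Finset.sum_ite_eq Finset.univ (σ b) (fun _ => 1)]; simp
  have hite_col : ∀ c, ∑ b, (if σ b = c then 1 else 0) = 1 := by
    intro c
    have h : ∀ b, (if σ b = c then (1:ℕ) else 0) = (if b = σ.symm c then 1 else 0) := by
      intro b
      congr 1
      simp [Equiv.eq_symm_apply, eq_comm]
    rw [Finset.sum_congr rfl (fun b _ => h b),
      Finset.sum_ite_eq' Finset.univ (σ.symm c) (fun _ => 1)]
    simp
  refine ⟨?_, ?_, ?_⟩
  · intro b
    have h1 : ∑ c, w b c
        = ∑ c, (w b c - if σ b = c then 1 else 0) + ∑ c, (if σ b = c then 1 else 0) := by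
      rw [← Finset.sum_add_distrib]
      exact Finset.sum_congr rfl fun c _ => hsplit b c
    have h2 := hite_row b
    have h3 := hrow b
    have h4 : 0 < w b (σ b) := hpos b
    have h5 : w b (σ b) ≤ k := by
      rw [← hrow b]
      exact Finset.single_le_sum (fun _ _ => Nat.zero_le _) (Finset.mem_univ _)
    omega
  · intro c
    have h1 : ∑ b, w b c
        = ∑ b, (w b c - if σ b = c then 1 else 0) + ∑ b, (if σ b = c then 1 else 0) := by
      rw [← Finset.sum_add_distrib]
      exact Finset.sum_congr rfl fun b _ => hsplit b c
    have h2 := hite_col c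
    have h3 := hcol c
    have h4 : 0 < w (σ.symm c) c := by
      have := hpos (σ.symm c)
      rwa [Equiv.apply_symm_apply] at this
    have h5 : w (σ.symm c) c ≤ k := by
      rw [← hcol c]
      exact Finset.single_le_sum (f := fun b => w b c) (fun _ _ => Nat.zero_le _)
        (Finset.mem_univ _)
    omega
  · have key : ∀ b, ∑ c, (w b c : ℝ) * D b c =
        D b (σ b) + ∑ c, ((w b c - if σ b = c then 1 else 0 : ℕ) : ℝ) * D b c := by
      intro b
      have h1 : ∀ c, (w b c : ℝ) * D b c =
          ((w b c - if σ b = c then 1 else 0 : ℕ) : ℝ) * D b c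
            + (if σ b = c then D b c else 0) := by
        intro c
        by_cases h : σ b = c
        · simp only [if_pos h]
          have hn : 1 ≤ w b c := by
            have := hpos b
            rw [h] at this
            omega
          obtain ⟨m, hm⟩ := Nat.exists_eq_add_of_le hn
          rw [hm, Nat.add_sub_cancel_left]
          push_cast
          ring
        · simp only [if_neg h, Nat.sub_zero]
          ring
      rw [Finset.sum_congr rfl (fun c _ => h1 c), Finset.sum_add_distrib,
        Finset.sum_ite_eq Finset.univ (σ b) (fun c => D b c)]
      simp [add_comm]
    rw [Finset.sum_congr rfl (fun b _ => key b), Finset.sum_add_distrib]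

/-- The total transported mass of a regular matrix is at least `k` times the optimum. -/
lemma sum_ge (D : B → C → ℝ) :
    ∀ (k : ℕ) (w : B → C → ℕ), (∀ b, ∑ c, w b c = k) → (∀ c, ∑ b, w b c = k) →
    (k : ℝ) * AOPT D ≤ ∑ b, ∑ c, (w b c : ℝ) * D b c := by
  intro k
  induction k with
  | zero =>
    intro w hrow hcol
    have hz : ∀ b c, w b c = 0 := by
      intro b c
      have h1 : w b c ≤ ∑ c, w b c :=
        Finset.single_le_sum (fun _ _ => Nat.zero_le _) (Finset.mem_univ _)
      rw [hrow b] at h1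
      omega
    simp [hz]
  | succ k ih =>
    intro w hrow hcol
    rcases isEmpty_or_nonempty B with hB | hB
    · rcases isEmpty_or_nonempty C with hC | hC
      · rw [AOPT_empty]
        simp
      · obtain ⟨c⟩ := hC
        have := hcol c
        simp at this
    · obtain ⟨b0⟩ := hB
      have hex : ∃ c0, 0 < w b0 c0 := by
        by_contra h
        push_neg at h
        have h1 : ∑ c, w b0 c = 0 := Finset.sum_eq_zero fun c _ => by have := h c; omega
        rw [hrow b0] at h1
        omega
      obtain ⟨c0, hc0⟩ := hex
      obtain ⟨σ, -, hσ⟩ := hall_forced w (k + 1) hrow hcol b0 c0 hc0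
      obtain ⟨hrow', hcol', hsum⟩ := sub_perm w (k + 1) hrow hcol σ hσ D
      simp only [Nat.add_sub_cancel] at hrow' hcol'
      have hIH := ih _ hrow' hcol'
      have hOPT : AOPT D ≤ ∑ b, D b (σ b) := by
        have := Acost_ge_AOPT D σ
        rwa [Acost_eq_sum] at this
      rw [hsum]
      push_cast
      linarith

end Abstract

/-- The main abstract theorem about max displacement in lifted assignment problems. -/
lemma AMAIN {A B C : Type*} [Fintype A] [Fintype B] [Fintype C] [Nonempty A] [Nonempty B]
    (hBC : Nonempty (B ≃ C))
    (D : B → C → ℝ) (E : A × B → A × C → ℝ)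
    (h1 : ∀ a b c, E (a, b) (a, c) = D b c)
    (h2 : ∀ a b a' c, D b c ≤ E (a, b) (a', c)) :
    AMAX E = AMAX D := by
  classical
  have hC : Nonempty C := ⟨hBC.some (Classical.arbitrary B)⟩
  set k := Fintype.card A with hk
  have hkpos : 0 < k := Fintype.card_pos
  set w : (A × B ≃ A × C) → B → C → ℕ :=
    fun φ b c => ∑ a : A, if (φ (a, b)).2 = c then 1 else 0 with hw
  have hrow : ∀ φ b, ∑ c, w φ b c = k := by
    intro φ b
    rw [Finset.sum_comm]
    have h3 : ∀ a : A, ∑ c, (if (φ (a, b)).2 = c then (1:ℕ) else 0) = 1 := by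
      intro a
      rw [Finset.sum_ite_eq Finset.univ ((φ (a, b)).2) (fun _ => 1)]
      simp
    rw [Finset.sum_congr rfl (fun a _ => h3 a)]
    simp [hk]
  have hcol : ∀ φ c, ∑ b, w φ b c = k := by
    intro φ c
    have e1 : ∑ b, w φ b c = ∑ p : A × B, (if (φ p).2 = c then (1:ℕ) else 0) := by
      rw [Fintype.sum_prod_type, Finset.sum_comm]
    have e2 : ∑ p : A × B, (if (φ p).2 = c then (1:ℕ) else 0)
        = ∑ q : A × C, (if q.2 = c then (1:ℕ) else 0) :=
      Fintype.sum_equiv φ _ _ (fun p => rfl)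
    have e3 : ∑ q : A × C, (if q.2 = c then (1:ℕ) else 0) = k := by
      rw [Fintype.sum_prod_type]
      have h3 : ∀ a : A, ∑ c' : C, (if c' = c then (1:ℕ) else 0) = 1 := by
        intro a
        rw [Finset.sum_ite_eq' Finset.univ c (fun _ => 1)]
        simp
      rw [Finset.sum_congr rfl (fun a _ => h3 a)]
      simp [hk]
    rw [e1, e2, e3]
  have hwD : ∀ φ : A × B ≃ A × C,
      ∑ b, ∑ c, ((w φ b c : ℕ) : ℝ) * D b c = ∑ p : A × B, D p.2 (φ p).2 := by
    intro φ
    have e1 : ∀ b, ∑ c, ((w φ b c : ℕ) : ℝ) * D b c = ∑ a : A, D b ((φ (a, b)).2) := by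
      intro b
      have e2 : ∀ c, ((w φ b c : ℕ) : ℝ) * D b c
          = ∑ a : A, (if (φ (a, b)).2 = c then D b c else 0) := by
        intro c
        rw [hw]
        push_cast
        rw [Finset.sum_mul]
        exact Finset.sum_congr rfl fun a _ => by split <;> simp
      rw [Finset.sum_congr rfl (fun c _ => e2 c), Finset.sum_comm]
      refine Finset.sum_congr rfl fun a _ => ?_
      rw [Finset.sum_ite_eq Finset.univ ((φ (a, b)).2) (fun c => D b c)]
      simp
    rw [Finset.sum_congr rfl (fun b _ => e1 b), Fintype.sum_prod_type, Finset.sum_comm]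
  have lower : ∀ φ : A × B ≃ A × C, (k : ℝ) * AOPT D ≤ ∑ p : A × B, D p.2 (φ p).2 := by
    intro φ
    rw [← hwD φ]
    exact sum_ge D k (w φ) (hrow φ) (hcol φ)
  have projle : ∀ φ : A × B ≃ A × C, ∑ p : A × B, D p.2 (φ p).2 ≤ Acost E φ := by
    intro φ
    rw [Acost_eq_sum]
    refine Finset.sum_le_sum fun p _ => ?_
    have := h2 p.1 p.2 (φ p).1 (φ p).2
    simpa using this
  have liftcost : ∀ ψ : B ≃ C,
      Acost E (Equiv.prodCongr (Equiv.refl A) ψ) = (k : ℝ) * Acost D ψ := by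
    intro ψ
    rw [Acost_eq_sum, Acost_eq_sum, Fintype.sum_prod_type]
    have h3 : ∀ a : A, ∀ b : B,
        E (a, b) ((Equiv.prodCongr (Equiv.refl A) ψ) (a, b)) = D b (ψ b) := by
      intro a b
      have h4 : (Equiv.prodCongr (Equiv.refl A) ψ) (a, b) = (a, ψ b) := rfl
      rw [h4, h1]
    rw [Finset.sum_congr rfl fun a _ => Finset.sum_congr rfl fun b _ => h3 a b]
    rw [Finset.sum_const, nsmul_eq_mul, Finset.card_univ, hk]
  have hABC : Nonempty (A × B ≃ A × C) := ⟨Equiv.prodCongr (Equiv.refl A) hBC.some⟩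
  have hOPTE : AOPT E = (k : ℝ) * AOPT D := by
    apply le_antisymm
    · obtain ⟨ψ, hψ⟩ := exists_optimal D hBC
      calc AOPT E ≤ Acost E (Equiv.prodCongr (Equiv.refl A) ψ) := Acost_ge_AOPT E _
      _ = (k : ℝ) * Acost D ψ := liftcost ψ
      _ = (k : ℝ) * AOPT D := by rw [hψ]
    · refine le_csInf ⟨Acost E hABC.some, hABC.some, rfl⟩ ?_
      rintro x ⟨φ, rfl⟩
      exact le_trans (lower φ) (projle φ)
  have hgem : AMAX D ∈ { m | ∃ φ : A × B ≃ A × C, Acost E φ = AOPT E ∧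
      m = ⨆ p : A × B, E p (φ p) } := by
    have hMD : { m | ∃ σ : B ≃ C, Acost D σ = AOPT D ∧ m = ⨆ b, D b (σ b) }.Nonempty := by
      obtain ⟨σ, hσ⟩ := exists_optimal D hBC
      exact ⟨_, σ, hσ, rfl⟩
    have hmem : AMAX D ∈ { m | ∃ σ : B ≃ C, Acost D σ = AOPT D ∧ m = ⨆ b, D b (σ b) } :=
      hMD.csSup_mem (maxset_finite D)
    obtain ⟨ψ, hψopt, hψsup⟩ := hmem
    refine ⟨Equiv.prodCongr (Equiv.refl A) ψ, ?_, ?_⟩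
    · rw [liftcost, hψopt, hOPTE]
    · have heq : ∀ p : A × B, E p ((Equiv.prodCongr (Equiv.refl A) ψ) p) = D p.2 (ψ p.2) := by
        rintro ⟨a, b⟩
        exact h1 a b (ψ b)
      rw [hψsup]
      apply le_antisymm
      · refine ciSup_le fun b => ?_
        have h5 := le_ciSup (f := fun p : A × B => E p ((Equiv.prodCongr (Equiv.refl A) ψ) p))
          (Set.finite_range _).bddAbove (Classical.arbitrary A, b)
        rwa [heq (Classical.arbitrary A, b)] at h5
      · refine ciSup_le fun p => ?_
        rw [heq p]
        exact le_ciSup (f := fun b => D b (ψ b)) (Set.finite_range _).bddAbove p.2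
  apply le_antisymm
  · refine csSup_le ⟨AMAX D, hgem⟩ ?_
    rintro m ⟨φ, hφopt, rfl⟩
    refine ciSup_le fun p => ?_
    have hEsum : ∑ p : A × B, E p (φ p) = (k : ℝ) * AOPT D := by
      rw [← Acost_eq_sum, hφopt, hOPTE]
    have hDge := lower φ
    have hterm_le : ∀ p : A × B, D p.2 (φ p).2 ≤ E p (φ p) := by
      intro p
      have := h2 p.1 p.2 (φ p).1 (φ p).2
      simpa using this
    have hDle : ∑ p : A × B, D p.2 (φ p).2 ≤ ∑ p : A × B, E p (φ p) :=
      Finset.sum_le_sum fun p _ => hterm_le p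
    have hDsum : ∑ p : A × B, D p.2 (φ p).2 = (k : ℝ) * AOPT D := by
      have h6 : ∑ p : A × B, D p.2 (φ p).2 ≤ (k : ℝ) * AOPT D := hEsum ▸ hDle
      linarith
    have hterm_eq : ∀ p : A × B, D p.2 (φ p).2 = E p (φ p) := by
      have h7 := (Finset.sum_eq_sum_iff_of_le (fun p _ => hterm_le p)).mp (by rw [hDsum, hEsum])
      exact fun p => h7 p (Finset.mem_univ p)
    obtain ⟨a, b⟩ := p
    set c0 := (φ (a, b)).2 with hc0
    have hwpos : 0 < w φ b c0 := by
      rw [hw]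
      have h8 : (if (φ (a, b)).2 = c0 then (1:ℕ) else 0) = 1 := if_pos rfl
      calc 0 < 1 := Nat.one_pos
      _ = (if (φ (a, b)).2 = c0 then (1:ℕ) else 0) := h8.symm
      _ ≤ ∑ a' : A, (if (φ (a', b)).2 = c0 then (1:ℕ) else 0) :=
        Finset.single_le_sum (f := fun a' : A => if (φ (a', b)).2 = c0 then (1:ℕ) else 0)
          (fun _ _ => Nat.zero_le _) (Finset.mem_univ a)
    obtain ⟨σ, hσb, hσpos⟩ := hall_forced (w φ) k (hrow φ) (hcol φ) b c0 hwpos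
    obtain ⟨hrow', hcol', hsum'⟩ := sub_perm (w φ) k (hrow φ) (hcol φ) σ hσpos D
    have hIH := sum_ge D (k - 1) _ hrow' hcol'
    have hwsum : ∑ b', ∑ c, ((w φ b' c : ℕ) : ℝ) * D b' c = (k : ℝ) * AOPT D := by
      rw [hwD φ, hDsum]
    have hkcast : ((k - 1 : ℕ) : ℝ) = (k : ℝ) - 1 := by
      rw [Nat.cast_sub hkpos]
      simp
    have hcost_le : ∑ b', D b' (σ b') ≤ AOPT D := by
      rw [hwsum] at hsum'
      rw [hkcast] at hIH
      linarith
    have hσopt : Acost D σ = AOPT D := by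
      apply le_antisymm
      · rwa [Acost_eq_sum]
      · exact Acost_ge_AOPT D σ
    have hfin : D b c0 ≤ AMAX D := by
      rw [← hσb]
      exact disp_le_AMAX D σ hσopt b
    calc E (a, b) (φ (a, b)) = D b c0 := (hterm_eq (a, b)).symm
    _ ≤ AMAX D := hfin
  · exact le_csSup (maxset_finite E).bddAbove hgem


section Concrete

lemma StrongProd_adj {G : SimpleGraph α} {H : SimpleGraph β} {p q : α × β} :
    (StrongProd G H).Adj p q ↔
      p ≠ q ∧ (p.1 = q.1 ∨ G.Adj p.1 q.1) ∧ (p.2 = q.2 ∨ H.Adj p.2 q.2) := Iff.rfl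

lemma mem_closedNbr {G : SimpleGraph V} {x a : V} :
    a ∈ closedNbr G x ↔ a = x ∨ G.Adj x a := by
  simp [closedNbr]

lemma mem_Rside {G : SimpleGraph V} {x y z : V} :
    z ∈ Rside G x y ↔ G.Adj x z ∧ ¬ G.Adj y z ∧ z ≠ y := by
  simp only [Rside, Set.mem_diff, Set.mem_union, Set.mem_inter_iff, Set.mem_singleton_iff,
    SimpleGraph.mem_neighborSet]
  tauto

/-- The graph homomorphism `b ↦ (a, b)` into the strong product. -/
def fiberHom (G : SimpleGraph α) (H : SimpleGraph β) (a : α) : H →g StrongProd G H where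
  toFun b := (a, b)
  map_rel' := fun {b b'} h => ⟨by simp [h.ne], Or.inl rfl, Or.inr h⟩

/-- The graph homomorphism `a ↦ (a, b)` into the strong product. -/
def baseHom (G : SimpleGraph α) (H : SimpleGraph β) (b : β) : G →g StrongProd G H where
  toFun a := (a, b)
  map_rel' := fun {a a'} h => ⟨by simp [h.ne], Or.inr h, Or.inl rfl⟩

lemma exists_walk_snd {G : SimpleGraph α} {H : SimpleGraph β} {u v : α × β}
    (p : (StrongProd G H).Walk u v) : ∃ q : H.Walk u.2 v.2, q.length ≤ p.length := by
  induction p with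
  | nil => exact ⟨SimpleGraph.Walk.nil, le_rfl⟩
  | @cons u w v h p ih =>
    obtain ⟨q, hq⟩ := ih
    rcases h.2.2 with h2 | h2
    · refine ⟨q.copy h2.symm rfl, ?_⟩
      rw [SimpleGraph.Walk.length_copy, SimpleGraph.Walk.length_cons]
      omega
    · refine ⟨SimpleGraph.Walk.cons h2 q, ?_⟩
      rw [SimpleGraph.Walk.length_cons, SimpleGraph.Walk.length_cons]
      omega

lemma dist_snd_le {G : SimpleGraph α} {H : SimpleGraph β} {u v : α × β}
    (h : (StrongProd G H).Reachable u v) :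
    H.dist u.2 v.2 ≤ (StrongProd G H).dist u v := by
  obtain ⟨p, hp⟩ := h.exists_walk_length_eq_dist
  obtain ⟨q, hq⟩ := exists_walk_snd p
  calc H.dist u.2 v.2 ≤ q.length := SimpleGraph.dist_le q
  _ ≤ p.length := hq
  _ = _ := hp

lemma dist_fiber {G : SimpleGraph α} {H : SimpleGraph β} (a : α) {b b' : β}
    (h : H.Reachable b b') :
    (StrongProd G H).dist (a, b) (a, b') = H.dist b b' := by
  apply le_antisymm
  · obtain ⟨q, hq⟩ := h.exists_walk_length_eq_dist
    have h3 := SimpleGraph.dist_le (q.map (fiberHom G H a))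
    rwa [SimpleGraph.Walk.length_map, hq] at h3
  · exact dist_snd_le (h.map (fiberHom G H a))

lemma Rside_strongProd (G : SimpleGraph α) (H : SimpleGraph β) {x1 x2 : α} {y1 y2 : β}
    (hN : closedNbr G x1 = closedNbr G x2) (hy : H.Adj y1 y2) :
    Rside (StrongProd G H) (x1, y1) (x2, y2) = (closedNbr G x1) ×ˢ (Rside H y1 y2) := by
  have hNiff : ∀ a, (a = x1 ∨ G.Adj x1 a) ↔ (a = x2 ∨ G.Adj x2 a) := by
    intro a
    have h := Set.ext_iff.mp hN a
    rw [mem_closedNbr, mem_closedNbr] at h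
    exact h
  ext ⟨a, b⟩
  simp only [Rside, Set.mem_diff, Set.mem_union, Set.mem_inter_iff, Set.mem_singleton_iff,
    SimpleGraph.mem_neighborSet, StrongProd_adj, Set.mem_prod, mem_closedNbr]
  constructor
  · rintro ⟨⟨hne1, hxa, hyb⟩, hnot⟩
    have hne2 : (a, b) ≠ (x2, y2) := fun h => hnot (Or.inr h)
    have hxa' : a = x1 ∨ G.Adj x1 a := by
      rcases hxa with h | h
      · exact Or.inl h.symm
      · exact Or.inr h
    have hxa2 : x2 = a ∨ G.Adj x2 a := by
      rcases (hNiff a).mp hxa' with h | h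
      · exact Or.inl h.symm
      · exact Or.inr h
    have hb2 : ¬(y2 = b ∨ H.Adj y2 b) := fun hb2 =>
      hnot (Or.inl ⟨⟨hne1, hxa, hyb⟩, ⟨Ne.symm hne2, hxa2, hb2⟩⟩)
    have hby2 : b ≠ y2 := fun h => hb2 (Or.inl h.symm)
    have hnadj2 : ¬H.Adj y2 b := fun h => hb2 (Or.inr h)
    have hb1 : H.Adj y1 b := by
      rcases hyb with h | h
      · exact absurd (h ▸ hy.symm) hnadj2
      · exact h
    refine ⟨hxa', hb1, ?_⟩
    rintro (⟨-, h2⟩ | h3)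
    · exact hnadj2 h2
    · exact hby2 h3
  · rintro ⟨hxa, hb1, hnot2⟩
    have hnadj2 : ¬H.Adj y2 b := fun h => hnot2 (Or.inl ⟨hb1, h⟩)
    have hbne : b ≠ y2 := fun h => hnot2 (Or.inr h)
    have hb1ne : b ≠ y1 := fun h => (h ▸ hb1).ne rfl
    have hxa' : x1 = a ∨ G.Adj x1 a := by
      rcases hxa with h | h
      · exact Or.inl h.symm
      · exact Or.inr h
    refine ⟨⟨?_, hxa', Or.inr hb1⟩, ?_⟩
    · intro hc
      exact hb1ne (congrArg Prod.snd hc).symm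
    · rintro (⟨⟨-, -, -⟩, ⟨-, -, hb2⟩⟩ | hc)
      · rcases hb2 with h | h
        · exact hbne h.symm
        · exact hnadj2 h
      · exact hbne (congrArg Prod.snd hc)

end Concrete


lemma ciSup_equiv_real {B B' : Type*} (e : B' ≃ B) (f : B → ℝ) :
    ⨆ b', f (e b') = ⨆ b, f b := by
  have h : Set.range (fun b' => f (e b')) = Set.range f := e.surjective.range_comp f
  rw [iSup, iSup, h]

lemma AMAX_relabel {B C B' C' : Type*} [Fintype B] [Fintype C] [Fintype B'] [Fintype C']
    (e1 : B' ≃ B) (e2 : C' ≃ C) (D : B → C → ℝ) :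
    AMAX (fun b' c' => D (e1 b') (e2 c')) = AMAX D := by
  set D' : B' → C' → ℝ := fun b' c' => D (e1 b') (e2 c') with hD'
  set T : (B' ≃ C') ≃ (B ≃ C) := e1.equivCongr e2 with hT
  have hTval : ∀ (σ' : B' ≃ C') (b : B), (T σ') b = e2 (σ' (e1.symm b)) := fun _ _ => rfl
  have hcost : ∀ σ' : B' ≃ C', Acost D' σ' = Acost D (T σ') := by
    intro σ'
    rw [Acost_eq_sum, Acost_eq_sum]
    refine Fintype.sum_equiv e1 _ _ ?_
    intro b'
    rw [hTval]
    simp [hD']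
  have hOPT : AOPT D' = AOPT D := by
    unfold AOPT
    congr 1
    ext x
    constructor
    · rintro ⟨σ', rfl⟩; exact ⟨T σ', hcost σ'⟩
    · rintro ⟨σ, rfl⟩
      exact ⟨T.symm σ, by rw [hcost (T.symm σ), T.apply_symm_apply]⟩
  have hsup : ∀ σ' : B' ≃ C', (⨆ b', D' b' (σ' b')) = ⨆ b, D b ((T σ') b) := by
    intro σ'
    rw [← ciSup_equiv_real e1 (fun b => D b ((T σ') b))]
    congr 1
    funext b'
    rw [hTval]
    simp [hD']
  unfold AMAX
  congr 1
  ext m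
  constructor
  · rintro ⟨σ', hopt, rfl⟩
    exact ⟨T σ', by rw [← hcost, hopt, hOPT], hsup σ'⟩
  · rintro ⟨σ, hopt, rfl⟩
    refine ⟨T.symm σ, ?_, ?_⟩
    · rw [hcost, T.apply_symm_apply, hopt, hOPT]
    · rw [hsup, T.apply_symm_apply]

theorem max_strongProd [Fintype α] [Fintype β] (G : SimpleGraph α) (H : SimpleGraph β)
    (dG dH : ℕ) (hG : G.IsRegularOfDegree dG) (hH : H.IsRegularOfDegree dH)
    (x1 x2 : α) (hN : closedNbr G x1 = closedNbr G x2) (y1 y2 : β) (hy : H.Adj y1 y2) :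
    MAXc (StrongProd G H) (x1, y1) (x2, y2) = MAXc H y1 y2 := by
  classical
  have hS1 : Rside (StrongProd G H) (x1, y1) (x2, y2) = (closedNbr G x1) ×ˢ (Rside H y1 y2) :=
    Rside_strongProd G H hN hy
  have hS2 : Rside (StrongProd G H) (x2, y2) (x1, y1) = (closedNbr G x1) ×ˢ (Rside H y2 y1) := by
    rw [Rside_strongProd G H hN.symm hy.symm, ← hN]
  set A := ↥(closedNbr G x1) with hA
  set B := ↥(Rside H y1 y2) with hB
  set C := ↥(Rside H y2 y1) with hC
  haveI hAne : Nonempty A := ⟨⟨x1, by rw [mem_closedNbr]; exact Or.inl rfl⟩⟩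
  set e1 : A × B ≃ ↥(Rside (StrongProd G H) (x1, y1) (x2, y2)) :=
    (Equiv.Set.prod (closedNbr G x1) (Rside H y1 y2)).symm.trans (Equiv.setCongr hS1.symm)
    with he1def
  set e2 : A × C ≃ ↥(Rside (StrongProd G H) (x2, y2) (x1, y1)) :=
    (Equiv.Set.prod (closedNbr G x1) (Rside H y2 y1)).symm.trans (Equiv.setCongr hS2.symm)
    with he2def
  set D : B → C → ℝ := fun b c => (H.dist b.1 c.1 : ℝ) with hD
  set Dsub : ↥(Rside (StrongProd G H) (x1, y1) (x2, y2)) →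
      ↥(Rside (StrongProd G H) (x2, y2) (x1, y1)) → ℝ :=
    fun z w => ((StrongProd G H).dist z.1 w.1 : ℝ) with hDsub
  have hMH : MAXc H y1 y2 = AMAX D := rfl
  have hMP : MAXc (StrongProd G H) (x1, y1) (x2, y2) = AMAX Dsub := rfl
  have hrelabel : AMAX Dsub = AMAX (fun (p : A × B) (q : A × C) => Dsub (e1 p) (e2 q)) :=
    (AMAX_relabel e1 e2 Dsub).symm
  set E : A × B → A × C → ℝ := fun p q => Dsub (e1 p) (e2 q) with hE
  have he1v : ∀ p : A × B, (e1 p).1 = (p.1.1, p.2.1) := fun _ => rfl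
  have he2v : ∀ q : A × C, (e2 q).1 = (q.1.1, q.2.1) := fun _ => rfl
  have hEval : ∀ (p : A × B) (q : A × C),
      E p q = ((StrongProd G H).dist (p.1.1, p.2.1) (q.1.1, q.2.1) : ℝ) := by
    intro p q
    rw [hE, hDsub]
    simp only [he1v, he2v]
  have hB1 : ∀ b : B, H.Adj y1 b.1 := fun b => (mem_Rside.mp b.2).1
  have hC1 : ∀ c : C, H.Adj y2 c.1 := fun c => (mem_Rside.mp c.2).1
  have hHreach : ∀ (b : B) (c : C), H.Reachable b.1 c.1 := fun b c =>
    (hB1 b).reachable.symm.trans (hy.reachable.trans (hC1 c).reachable)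
  have hGreach : ∀ a : A, G.Reachable x1 a.1 := by
    intro a
    rcases mem_closedNbr.mp a.2 with h | h
    · rw [h]
    · exact h.reachable
  have hPreach : ∀ (a : A) (b : B) (a' : A) (c : C),
      (StrongProd G H).Reachable (a.1, b.1) (a'.1, c.1) := by
    intro a b a' c
    have r1 : G.Reachable a.1 a'.1 := (hGreach a).symm.trans (hGreach a')
    have r2 : (StrongProd G H).Reachable (a.1, b.1) (a'.1, b.1) := r1.map (baseHom G H b.1)
    have r3 : (StrongProd G H).Reachable (a'.1, b.1) (a'.1, c.1) :=
      (hHreach b c).map (fiberHom G H a'.1)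
    exact r2.trans r3
  have h1 : ∀ (a : A) (b : B) (c : C), E (a, b) (a, c) = D b c := by
    intro a b c
    rw [hEval (a, b) (a, c), hD]
    have := dist_fiber (G := G) a.1 (hHreach b c)
    rw [this]
  have h2 : ∀ (a : A) (b : B) (a' : A) (c : C), D b c ≤ E (a, b) (a', c) := by
    intro a b a' c
    have h3 : H.dist b.1 c.1 ≤ (StrongProd G H).dist (a.1, b.1) (a'.1, c.1) :=
      dist_snd_le (hPreach a b a' c)
    rw [hEval (a, b) (a', c), hD]
    show ((H.dist b.1 c.1 : ℕ) : ℝ) ≤ (((StrongProd G H).dist (a.1, b.1) (a'.1, c.1) : ℕ) : ℝ)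
    exact_mod_cast h3
  rw [hMP, hMH, hrelabel]
  by_cases hEq : Nonempty (B ≃ C)
  · rcases isEmpty_or_nonempty B with hBe | hBne
    · haveI := hBe
      haveI hCe : IsEmpty C := Function.isEmpty hEq.some.symm
      exact (AMAX_empty E).trans (AMAX_empty D).symm
    · exact AMAIN hEq D E h1 h2
  · have hcardne : ¬ Nonempty (A × B ≃ A × C) := by
      rintro ⟨φ⟩
      have hc : Fintype.card (A × B) = Fintype.card (A × C) := Fintype.card_congr φ
      rw [Fintype.card_prod, Fintype.card_prod] at hc
      have hbc : Fintype.card B = Fintype.card C :=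
        Nat.eq_of_mul_eq_mul_left Fintype.card_pos hc
      exact hEq ⟨Fintype.equivOfCardEq hbc⟩
    have hMe : { m | ∃ σ : A × B ≃ A × C, Acost E σ = AOPT E ∧ m = ⨆ p, E p (σ p) } = ∅ := by
      apply Set.eq_empty_iff_forall_notMem.mpr
      rintro m ⟨σ, -, -⟩
      exact hcardne ⟨σ⟩
    have hMD : { m | ∃ σ : B ≃ C, Acost D σ = AOPT D ∧ m = ⨆ b, D b (σ b) } = ∅ := by
      apply Set.eq_empty_iff_forall_notMem.mpr
      rintro m ⟨σ, -, -⟩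
      exact hEq ⟨σ⟩
    unfold AMAX
    rw [hMe, hMD]
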